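/- arXiv:2109.00369 — 3 statements merged into one kernel-verified Lean document; each statement's English description precedes it below -/
import Mathlib

section
/- Define f(n) = ∑_k π_k [d·n_k + N(D−d)·min(n_k,1)] for n : Fin K → ℕ. Suppose n_{k1} ≥ 2, n_{k2} = 0, and π_{k2}/π_{k1} > d/(N·D − (N−1)·d). Let n' be obtained from n by decreasing n_{k1} by 1 and setting n'_{k2} = 1. Then f(n') > f(n), i.e., the compare-and-replace step strictly improves the objective. -/
theorem stmt_4 (N K : ℕ) (hN : 1 ≤ N) (hK : 2 ≤ K)
    (π : Fin K → ℝ) (hπ : ∀ k, 0 < π k)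
    (d D : ℝ) (hd : 0 < d) (hdD : d < D)
    (k1 k2 : Fin K) (hk : k1 ≠ k2)
    (n : Fin K → ℕ) (hn1 : 2 ≤ n k1) (hn2 : n k2 = 0)
    (hratio : π k2 / π k1 > d / ((N : ℝ) * D - ((N : ℝ) - 1) * d))
    (n' : Fin K → ℕ)
    (hn' : n' = Function.update (Function.update n k1 (n k1 - 1)) k2 1) :
    (∑ k, π k * (d * (n k : ℝ) + (N : ℝ) * (D - d) * ((min (n k) 1 : ℕ) : ℝ)))
    < ∑ k, π k * (d * (n' k : ℝ) + (N : ℝ) * (D - d) * ((min (n' k) 1 : ℕ) : ℝ)) := by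
  set F : (Fin K → ℕ) → Fin K → ℝ := fun m k =>
    π k * (d * (m k : ℝ) + (N : ℝ) * (D - d) * ((min (m k) 1 : ℕ) : ℝ)) with hF
  have hnk1 : n' k1 = n k1 - 1 := by
    subst hn'; rw [Function.update_of_ne hk, Function.update_self]
  have hnk2 : n' k2 = 1 := by subst hn'; rw [Function.update_self]
  have hother : ∀ k, k ≠ k1 → k ≠ k2 → n' k = n k := by
    intro k h1 h2
    subst hn'; rw [Function.update_of_ne h2, Function.update_of_ne h1]
  rw [← sub_pos, ← Finset.sum_sub_distrib]
  set G : Fin K → ℝ := fun k => F n' k - F n k with hG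
  have hk2mem : k2 ∈ Finset.univ.erase k1 := by
    simp [Finset.mem_erase, hk.symm]
  have hsum : ∑ k, G k = G k1 + (G k2 + ∑ k ∈ (Finset.univ.erase k1).erase k2, G k) := by
    rw [Finset.add_sum_erase _ _ hk2mem, Finset.add_sum_erase _ _ (Finset.mem_univ k1)]
  have hrest : ∑ k ∈ (Finset.univ.erase k1).erase k2, G k = 0 := by
    apply Finset.sum_eq_zero
    intro k hkmem
    simp only [Finset.mem_erase] at hkmem
    simp [hG, hF, hother k hkmem.2.1 hkmem.1]
  rw [hsum, hrest, add_zero]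
  -- compute G k1 and G k2
  have hmin1 : min (n k1) 1 = 1 := by omega
  have hmin1' : min (n k1 - 1) 1 = 1 := by omega
  have hcast : ((n k1 - 1 : ℕ) : ℝ) = (n k1 : ℝ) - 1 := by
    rw [Nat.cast_sub (by omega)]; norm_num
  have hGk1 : G k1 = -(π k1 * d) := by
    simp only [hG, hF, hnk1, hmin1, hmin1', hcast, Nat.cast_one]
    ring
  have hGk2 : G k2 = π k2 * (d + (N : ℝ) * (D - d)) := by
    simp only [hG, hF, hnk2, hn2]
    norm_num
  rw [hGk1, hGk2]
  have hE : (0 : ℝ) < (N : ℝ) * D - ((N : ℝ) - 1) * d := by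
    have hN1 : (1 : ℝ) ≤ (N : ℝ) := by exact_mod_cast hN
    nlinarith
  have hπ1 := hπ k1
  rw [gt_iff_lt, div_lt_div_iff₀ hE hπ1] at hratio
  nlinarith [hπ k2]
end

section
/- Under the same setup, if π_{k2}/π_{k1} < d/(N·D − (N−1)·d), then moving a copy from a video k2 with n_{k2}=0 to n_{k2}=1 at the expense of a video k1 with n_{k1} ≥ 2 strictly decreases the objective f(n) = ∑_k π_k [d·n_k + N(D−d)·min(n_k,1)]. -/
theorem stmt_5 (N K : ℕ) (hN : 1 ≤ N) (hK : 2 ≤ K)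
    (π : Fin K → ℝ) (hπ : ∀ k, 0 < π k)
    (d D : ℝ) (hd : 0 < d) (hdD : d < D)
    (k1 k2 : Fin K) (hk : k1 ≠ k2)
    (n : Fin K → ℕ) (hn1 : 2 ≤ n k1) (hn2 : n k2 = 0)
    (hratio : π k2 / π k1 < d / ((N : ℝ) * D - ((N : ℝ) - 1) * d))
    (n' : Fin K → ℕ)
    (hn' : n' = Function.update (Function.update n k1 (n k1 - 1)) k2 1) :
    (∑ k, π k * (d * (n' k : ℝ) + (N : ℝ) * (D - d) * ((min (n' k) 1 : ℕ) : ℝ)))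
    < ∑ k, π k * (d * (n k : ℝ) + (N : ℝ) * (D - d) * ((min (n k) 1 : ℕ) : ℝ)) := by
  set f : Fin K → ℕ → ℝ := fun k x =>
    π k * (d * (x : ℝ) + (N : ℝ) * (D - d) * ((min x 1 : ℕ) : ℝ)) with hf
  have hk1 : n' k1 = n k1 - 1 := by
    simp [hn', Function.update_apply, hk, hk.symm]
  have hk2 : n' k2 = 1 := by simp [hn']
  have hother : ∀ k, k ≠ k1 → k ≠ k2 → n' k = n k := by
    intro k h1 h2
    simp [hn', Function.update_apply, h1, h2]
  have key : ∑ k, (f k (n' k) - f k (n k)) = (f k1 (n' k1) - f k1 (n k1)) +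
      (f k2 (n' k2) - f k2 (n k2)) := by
    rw [← Finset.sum_pair (f := fun k => f k (n' k) - f k (n k)) hk]
    refine (Finset.sum_subset (Finset.subset_univ _) ?_).symm
    intro k _ hkmem
    simp only [Finset.mem_insert, Finset.mem_singleton, not_or] at hkmem
    rw [hother k hkmem.1 hkmem.2]
    ring
  have hsub : (∑ k, f k (n' k)) - ∑ k, f k (n k) < 0 := by
    rw [← Finset.sum_sub_distrib, key, hk1, hk2, hn2]
    have hmin1 : min (n k1) 1 = 1 := by omega
    have hmin2 : min (n k1 - 1) 1 = 1 := by omega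
    have hcast : ((n k1 - 1 : ℕ) : ℝ) = (n k1 : ℝ) - 1 := by
      have : 1 ≤ n k1 := by omega
      push_cast [this]; ring
    have hmin0 : min 0 1 = 0 := rfl
    simp only [hf, hmin0, hmin1, hmin2, hcast, Nat.cast_zero, Nat.cast_one, min_self]
    have hA : (0 : ℝ) < (N : ℝ) * D - ((N : ℝ) - 1) * d := by
      have hN1 : (1 : ℝ) ≤ (N : ℝ) := by exact_mod_cast hN
      nlinarith
    have h1 := hπ k1
    have h2 := hπ k2
    rw [div_lt_div_iff₀ h1 hA] at hratio
    nlinarith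
  linarith [hsub]
end

section
/- Let f(n) = ∑_k π_k [d·n_k + N(D−d)·min(n_k,1)]. If n is such that there exist k1 with n_{k1} ≥ 2 and k2 with n_{k2} = 0 satisfying π_{k2}·(N·D−(N−1)·d) > π_{k1}·d, then n is not a maximizer of f over allocations with the same total ∑_k n_k. -/
theorem stmt_15 (N K : ℕ) (hN : 1 ≤ N) (hK : 2 ≤ K)
    (π : Fin K → ℝ) (hπ : ∀ k, 0 < π k)
    (d D : ℝ) (hd : 0 < d) (hdD : d < D)
    (n : Fin K → ℕ) (k1 k2 : Fin K)
    (hn1 : 2 ≤ n k1) (hn2 : n k2 = 0)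
    (hratio : π k2 * ((N : ℝ) * D - ((N : ℝ) - 1) * d) > π k1 * d) :
    ¬ (∀ n' : Fin K → ℕ, (∑ k, n' k) = (∑ k, n k) →
        (∑ k, π k * (d * (n' k : ℝ) + (N : ℝ) * (D - d) * ((min (n' k) 1 : ℕ) : ℝ)))
        ≤ ∑ k, π k * (d * (n k : ℝ) + (N : ℝ) * (D - d) * ((min (n k) 1 : ℕ) : ℝ))) := by
  intro h
  have hne : k2 ≠ k1 := by
    intro e; rw [e] at hn2; omega
  set m : Fin K → ℕ := Function.update n k1 (n k1 - 1) with hm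
  set n' : Fin K → ℕ := Function.update m k2 1 with hn'
  have hmk1 : m k1 = n k1 - 1 := Function.update_self _ _ _
  have hn'k1 : n' k1 = n k1 - 1 := by
    rw [hn', Function.update_of_ne (Ne.symm hne), hmk1]
  have hn'k2 : n' k2 = 1 := Function.update_self _ _ _
  have hn'o : ∀ k, k ≠ k1 → k ≠ k2 → n' k = n k := by
    intro k h1 h2
    rw [hn', Function.update_of_ne h2, hm, Function.update_of_ne h1]
  -- sum equality
  have hk1mem : k1 ∈ (Finset.univ.erase k2) := Finset.mem_erase.2 ⟨Ne.symm hne, Finset.mem_univ _⟩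
  have hsum : (∑ k, n' k) = (∑ k, n k) := by
    have hk1mem' : k1 ∈ Finset.univ \ {k2} := by simp [Ne.symm hne]
    rw [hn', Finset.sum_update_of_mem (Finset.mem_univ k2),
        hm, Finset.sum_update_of_mem hk1mem',
        ← Finset.add_sum_erase _ n (Finset.mem_univ k2), hn2,
        Finset.erase_eq, ← Finset.add_sum_erase _ n (by simp [Ne.symm hne] : k1 ∈ (Finset.univ \ {k2})), Finset.erase_eq]
    omega
  have hle := h n' hsum
  -- the difference
  have hdiff : (∑ k, π k * (d * (n' k : ℝ) + (N : ℝ) * (D - d) * ((min (n' k) 1 : ℕ) : ℝ)))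
      - (∑ k, π k * (d * (n k : ℝ) + (N : ℝ) * (D - d) * ((min (n k) 1 : ℕ) : ℝ)))
      = ∑ k ∈ ({k1, k2} : Finset (Fin K)),
        (π k * (d * (n' k : ℝ) + (N : ℝ) * (D - d) * ((min (n' k) 1 : ℕ) : ℝ))
          - π k * (d * (n k : ℝ) + (N : ℝ) * (D - d) * ((min (n k) 1 : ℕ) : ℝ))) := by
    rw [← Finset.sum_sub_distrib]
    refine (Finset.sum_subset (Finset.subset_univ _) ?_).symm
    intro x _ hx
    simp only [Finset.mem_insert, Finset.mem_singleton, not_or] at hx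
    rw [hn'o x hx.1 hx.2, sub_self]
  rw [Finset.sum_pair (Ne.symm hne)] at hdiff
  have hmin1 : n k1 ⊓ 1 = 1 := by omega
  have hmin1' : (n k1 - 1) ⊓ 1 = 1 := by omega
  have hcast : ((n k1 - 1 : ℕ) : ℝ) = (n k1 : ℝ) - 1 := by
    have h1 : (1:ℕ) ≤ n k1 := by omega
    push_cast [h1]; ring
  rw [hn'k1, hn'k2, hn2] at hdiff
  rw [hmin1, hmin1', hcast] at hdiff
  norm_num at hdiff
  have hpos : (0:ℝ) < π k2 * (d + (N:ℝ) * (D - d)) - π k1 * d := by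
    have : π k2 * ((N : ℝ) * D - ((N : ℝ) - 1) * d) = π k2 * (d + (N:ℝ) * (D - d)) := by ring
    rw [this] at hratio
    linarith
  have : (0:ℝ) < (∑ k, π k * (d * (n' k : ℝ) + (N : ℝ) * (D - d) * ((min (n' k) 1 : ℕ) : ℝ)))
      - (∑ k, π k * (d * (n k : ℝ) + (N : ℝ) * (D - d) * ((min (n k) 1 : ℕ) : ℝ))) := by
    push_cast
    rw [hdiff]; linarith
  linarith
end
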